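/- arXiv:2506.19305 — 6 statements merged into one kernel-verified Lean document; each statement's English description precedes it below -/
import Mathlib

section
/- Let (M, d) be a metric space and let F : M → (closed bounded nonempty subsets of M) be a set-valued map such that the Hausdorff distance between F(x) and F(y) is at most α·d(x,y) for all x, y ∈ M, where 0 ≤ α < 1. Define the extension F̄ on closed bounded nonempty subsets by F̄(S) = closure of ⋃_{x∈S} F(x). Then F̄ is a contraction with Lipschitz constant α with respect to the Hausdorff distance. -/
lemma aux_stmt2 {M : Type*} [MetricSpace M] (α : ℝ) (hα0 : 0 ≤ α) (hα1 : α < 1)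
    (F : M → Set M)
    (hF : ∀ x, (F x).Nonempty ∧ IsClosed (F x) ∧ Bornology.IsBounded (F x))
    (hlip : ∀ x y, Metric.hausdorffDist (F x) (F y) ≤ α * dist x y)
    (S T : Set M) (hSne : S.Nonempty) (hSbd : Bornology.IsBounded S)
    (hTne : T.Nonempty) (hTbd : Bornology.IsBounded T)
    (δ : ℝ) (hδ : 0 < δ) :
    ∀ p ∈ ⋃ x ∈ S, F x,
      Metric.infDist p (⋃ y ∈ T, F y) ≤ α * Metric.hausdorffDist S T + δ := by
  intro p hp
  simp only [Set.mem_iUnion] at hp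
  obtain ⟨x, hx, hpx⟩ := hp
  have hne : EMetric.hausdorffEdist S T ≠ ⊤ :=
    Metric.hausdorffEdist_ne_top_of_nonempty_of_bounded hSne hTne hSbd hTbd
  have h1 : Metric.infDist x T ≤ Metric.hausdorffDist S T :=
    Metric.infDist_le_hausdorffDist_of_mem hx hne
  obtain ⟨y, hy, hdy⟩ := (Metric.infDist_lt_iff hTne).mp
    (show Metric.infDist x T < Metric.infDist x T + δ by linarith)
  have hfe : EMetric.hausdorffEdist (F x) (F y) ≠ ⊤ :=
    Metric.hausdorffEdist_ne_top_of_nonempty_of_bounded (hF x).1 (hF y).1 (hF x).2.2 (hF y).2.2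
  have h2 : Metric.infDist p (F y) ≤ Metric.hausdorffDist (F x) (F y) :=
    Metric.infDist_le_hausdorffDist_of_mem hpx hfe
  have h3 : Metric.infDist p (⋃ y ∈ T, F y) ≤ Metric.infDist p (F y) :=
    Metric.infDist_le_infDist_of_subset
      (Set.subset_biUnion_of_mem hy) (hF y).1
  have h4 := hlip x y
  have h5 : α * dist x y ≤ α * (Metric.hausdorffDist S T + δ) := by
    apply mul_le_mul_of_nonneg_left _ hα0; linarith
  nlinarith

theorem stmt2 {M : Type*} [MetricSpace M]
    (α : ℝ) (hα0 : 0 ≤ α) (hα1 : α < 1)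
    (F : M → Set M)
    (hF : ∀ x, (F x).Nonempty ∧ IsClosed (F x) ∧ Bornology.IsBounded (F x))
    (hlip : ∀ x y, Metric.hausdorffDist (F x) (F y) ≤ α * dist x y)
    (S T : Set M)
    (hS : S.Nonempty ∧ IsClosed S ∧ Bornology.IsBounded S)
    (hT : T.Nonempty ∧ IsClosed T ∧ Bornology.IsBounded T) :
    Metric.hausdorffDist (closure (⋃ x ∈ S, F x)) (closure (⋃ x ∈ T, F x)) ≤
      α * Metric.hausdorffDist S T := by
  obtain ⟨hSne, hScl, hSbd⟩ := hS
  obtain ⟨hTne, hTcl, hTbd⟩ := hT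
  rw [Metric.hausdorffDist_closure]
  refine le_of_forall_pos_le_add fun δ hδ => ?_
  apply Metric.hausdorffDist_le_of_infDist
    (by have := Metric.hausdorffDist_nonneg (s := S) (t := T); positivity)
  · exact aux_stmt2 α hα0 hα1 F hF hlip S T hSne hSbd hTne hTbd δ hδ
  · intro p hp
    have := aux_stmt2 α hα0 hα1 F hF hlip T S hTne hTbd hSne hSbd δ hδ p hp
    rwa [Metric.hausdorffDist_comm] at this
end

section
/- Let X, Y be finite sets and Q : Y × X × Y → [0,1] channel constants with ∑_y Q(y|x,y') = 1. Suppose P'_{X_t,Y_{t-1}}, t = 1,…,n, are joint distributions on X × Y arising from a Markov evolution: there exist an initial distribution P'_{Y_0} on Y and conditionals P'_{X_t|Y_{t-1}} such that P'_{X_t,Y_{t-1}}(x,y') = P'_{X_t|Y_{t-1}}(x|y')·P'_{Y_{t-1}}(y') where P'_{Y_t}(y) = ∑_{x,y'} Q(y|x,y')·P'_{X_t,Y_{t-1}}(x,y'). Define the average P̃(x,y') = (1/n)∑_{t=1}^n P'_{X_t,Y_{t-1}}(x,y'). Then the marginal P̃_{Y'}(y) = ∑_x P̃(x,y) and the output marginal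 P̃_Y(y) = ∑_{x,y'} Q(y|x,y')·P̃(x,y') satisfy |P̃_{Y'}(y) - P̃_Y(y)| ≤ 1/n for all y ∈ Y. -/
open Finset

theorem stmt5 {X Y : Type*} [Fintype X] [Fintype Y]
    (Q : Y → X → Y → ℝ)
    (hQ0 : ∀ y x y', 0 ≤ Q y x y') (hQ1 : ∀ x y', ∑ y, Q y x y' = 1)
    (n : ℕ) (hn : 0 < n)
    (PY : ℕ → Y → ℝ) (cond : ℕ → Y → X → ℝ)
    (hPY0 : (∀ y, 0 ≤ PY 0 y) ∧ ∑ y, PY 0 y = 1)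
    (hcond : ∀ t y', (∀ x, 0 ≤ cond t y' x) ∧ ∑ x, cond t y' x = 1)
    (hstep : ∀ t y, PY (t+1) y = ∑ x, ∑ y', Q y x y' * (cond t y' x * PY t y')) :
    ∀ y, |(∑ x, ((n:ℝ)⁻¹ * ∑ t ∈ Finset.range n, cond t y x * PY t y)) -
          (∑ x, ∑ y', Q y x y' *
            ((n:ℝ)⁻¹ * ∑ t ∈ Finset.range n, cond t y' x * PY t y'))| ≤ 1 / n := by
  -- PY is a probability distribution at every time
  have hprob : ∀ t, (∀ y, 0 ≤ PY t y) ∧ ∑ y, PY t y = 1 := by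
    intro t
    induction t with
    | zero => exact hPY0
    | succ t ih =>
      constructor
      · intro y
        rw [hstep]
        apply Finset.sum_nonneg; intro x _
        apply Finset.sum_nonneg; intro y' _
        exact mul_nonneg (hQ0 y x y') (mul_nonneg ((hcond t y').1 x) (ih.1 y'))
      · have : ∑ y, PY (t+1) y
            = ∑ x, ∑ y', (∑ y, Q y x y') * (cond t y' x * PY t y') := by
          simp only [hstep]
          rw [Finset.sum_comm]
          congr 1; ext x
          rw [Finset.sum_comm]
          congr 1; ext y'
          rw [← Finset.sum_mul]
        rw [this]
        simp only [hQ1, one_mul]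
        rw [Finset.sum_comm]
        have : ∀ y', ∑ x, cond t y' x * PY t y' = PY t y' := by
          intro y'
          rw [← Finset.sum_mul, (hcond t y').2, one_mul]
        simp only [this, ih.2]
  have hle1 : ∀ t y, PY t y ≤ 1 := by
    intro t y
    calc PY t y ≤ ∑ y', PY t y' :=
          Finset.single_le_sum (fun y' _ => (hprob t).1 y') (mem_univ y)
      _ = 1 := (hprob t).2
  intro y
  have hL : (∑ x, ((n:ℝ)⁻¹ * ∑ t ∈ Finset.range n, cond t y x * PY t y))
      = (n:ℝ)⁻¹ * ∑ t ∈ Finset.range n, PY t y := by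
    rw [← Finset.mul_sum]
    congr 1
    rw [Finset.sum_comm]
    congr 1; ext t
    rw [← Finset.sum_mul, (hcond t y).2, one_mul]
  have hR : (∑ x, ∑ y', Q y x y' *
        ((n:ℝ)⁻¹ * ∑ t ∈ Finset.range n, cond t y' x * PY t y'))
      = (n:ℝ)⁻¹ * ∑ t ∈ Finset.range n, PY (t+1) y := by
    have key : ∀ t, ∑ x, ∑ y', Q y x y' * (cond t y' x * PY t y') = PY (t+1) y :=
      fun t => (hstep t y).symm
    calc ∑ x, ∑ y', Q y x y' * ((n:ℝ)⁻¹ * ∑ t ∈ Finset.range n, cond t y' x * PY t y')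
        = ∑ x, ∑ y', ∑ t ∈ Finset.range n,
            (n:ℝ)⁻¹ * (Q y x y' * (cond t y' x * PY t y')) := by
          refine Finset.sum_congr rfl fun x _ => Finset.sum_congr rfl fun y' _ => ?_
          rw [Finset.mul_sum, Finset.mul_sum]
          exact Finset.sum_congr rfl fun t _ => by ring
      _ = ∑ x, ∑ t ∈ Finset.range n, ∑ y',
            (n:ℝ)⁻¹ * (Q y x y' * (cond t y' x * PY t y')) :=
          Finset.sum_congr rfl fun x _ => Finset.sum_comm
      _ = ∑ t ∈ Finset.range n, ∑ x, ∑ y',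
            (n:ℝ)⁻¹ * (Q y x y' * (cond t y' x * PY t y')) := Finset.sum_comm
      _ = ∑ t ∈ Finset.range n, (n:ℝ)⁻¹ * PY (t+1) y := by
          refine Finset.sum_congr rfl fun t _ => ?_
          rw [← key t, Finset.mul_sum]
          exact Finset.sum_congr rfl fun x _ => (Finset.mul_sum _ _ _).symm
      _ = (n:ℝ)⁻¹ * ∑ t ∈ Finset.range n, PY (t+1) y := (Finset.mul_sum _ _ _).symm
  rw [hL, hR, ← mul_sub, ← Finset.sum_sub_distrib]
  rw [Finset.sum_range_sub' (fun t => PY t y)]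
  rw [abs_mul]
  have hn' : (0:ℝ) < n := Nat.cast_pos.mpr hn
  rw [abs_of_nonneg (inv_nonneg.mpr hn'.le)]
  rw [one_div]
  have : |PY 0 y - PY n y| ≤ 1 := by
    rw [abs_le]
    constructor
    · linarith [(hprob 0).1 y, hle1 n y]
    · linarith [(hprob n).1 y, hle1 0 y]
  calc (n:ℝ)⁻¹ * |PY 0 y - PY n y| ≤ (n:ℝ)⁻¹ * 1 :=
        mul_le_mul_of_nonneg_left this (inv_nonneg.mpr hn'.le)
    _ = (n:ℝ)⁻¹ := mul_one _
end

section
/- Let X, Y be finite sets and Q : Y × X × Y → [0,1] fixed channel constants with ∑_y Q(y|x,y') = 1. For a joint distribution P on X × Y, define the joint distribution R on Y × X × Y by R(y,x,y') = Q(y|x,y')·P(x,y'), and let I(P) = I(X; Y | Y') be the conditional mutual information of R. Then the map P ↦ I(P) is concave on the simplex of distributions on X × Y. -/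
/-!
Because `∑ y, Q y x y' = 1`, the `(X, Y')`-marginal of `R` is `P` itself, so
`I(P) = ∑ R log Q - ∑_{y,y'} R_{YY'} log (R_{YY'} / R_{Y'})`. The first sum is linear in `P`.
In the second, `(s, t) ↦ s log (s / t)` is the perspective `t φ(s / t)` of the convex function
`φ u = u log u`, hence jointly convex, and it is evaluated at the linear functions
`P ↦ (R_{YY'}(y, y'), R_{Y'}(y'))`.
-/

open Finset Real

theorem ConcaveOn.sum {𝕜 E β ι : Type*} [Semiring 𝕜] [PartialOrder 𝕜] [AddCommMonoid E]
    [AddCommMonoid β] [PartialOrder β] [IsOrderedAddMonoid β] [SMul 𝕜 E] [Module 𝕜 β]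
    {s : Set E} {f : ι → E → β} (t : Finset ι) (hs : Convex 𝕜 s)
    (hf : ∀ i ∈ t, ConcaveOn 𝕜 s (f i)) : ConcaveOn 𝕜 s (fun x => ∑ i ∈ t, f i x) := by
  classical
  induction t using Finset.induction_on with
  | empty => simpa using concaveOn_const (0 : β) hs
  | insert i t hi ih =>
    simp only [Finset.sum_insert hi]
    exact (hf i (mem_insert_self i t)).add (ih fun j hj => hf j (mem_insert_of_mem hj))

theorem convex_setOf_nonneg_le : Convex ℝ {p : ℝ × ℝ | 0 ≤ p.1 ∧ p.1 ≤ p.2} := by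
  rintro ⟨s₁, t₁⟩ ⟨hs₁ : 0 ≤ s₁, hst₁ : s₁ ≤ t₁⟩ ⟨s₂, t₂⟩ ⟨hs₂ : 0 ≤ s₂, hst₂ : s₂ ≤ t₂⟩ a b ha hb -
  simp only [Set.mem_ofPred_eq, Prod.smul_mk, Prod.mk_add_mk, smul_eq_mul]
  constructor
  · positivity
  · gcongr

theorem ConvexOn.perspective {f : ℝ → ℝ} (hf : ConvexOn ℝ (Set.Icc 0 1) f) :
    ConvexOn ℝ {p : ℝ × ℝ | 0 ≤ p.1 ∧ p.1 ≤ p.2} (fun p => p.2 * f (p.1 / p.2)) := by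
  refine ⟨convex_setOf_nonneg_le, ?_⟩
  rintro ⟨s₁, t₁⟩ ⟨hs₁ : 0 ≤ s₁, hst₁ : s₁ ≤ t₁⟩ ⟨s₂, t₂⟩ ⟨hs₂ : 0 ≤ s₂, hst₂ : s₂ ≤ t₂⟩
    a b ha hb hab
  simp only [Prod.smul_mk, Prod.mk_add_mk, smul_eq_mul]
  have ht₁ := hs₁.trans hst₁
  have ht₂ := hs₂.trans hst₂
  have hu₁ : s₁ / t₁ ∈ Set.Icc 0 1 := ⟨by positivity, div_le_one_of_le₀ hst₁ ht₁⟩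
  have hu₂ : s₂ / t₂ ∈ Set.Icc 0 1 := ⟨by positivity, div_le_one_of_le₀ hst₂ ht₂⟩
  -- `t = 0` forces `s = 0`, so this survives the junk value of `/ 0`
  have hst : ∀ {s t : ℝ}, 0 ≤ s → s ≤ t → t * (s / t) = s := fun {s t} hs hst => by
    rcases (hs.trans hst).eq_or_lt with rfl | ht
    · simp [le_antisymm hst hs]
    · field_simp
  set t := a * t₁ + b * t₂
  rcases (show 0 ≤ t by positivity).eq_or_lt with ht | ht
  · have h₁ : a * t₁ = 0 := by nlinarith [mul_nonneg ha ht₁, mul_nonneg hb ht₂]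
    have h₂ : b * t₂ = 0 := by nlinarith [mul_nonneg ha ht₁, mul_nonneg hb ht₂]
    rw [← ht, zero_mul, ← mul_assoc, ← mul_assoc, h₁, h₂]
    simp
  · have hmix : (a * s₁ + b * s₂) / t = a * t₁ / t * (s₁ / t₁) + b * t₂ / t * (s₂ / t₂) := by
      conv_lhs => rw [← hst hs₁ hst₁, ← hst hs₂ hst₂]
      ring
    have key := hf.2 hu₁ hu₂ (by positivity : 0 ≤ a * t₁ / t) (by positivity : 0 ≤ b * t₂ / t)
      (by rw [← add_div, div_self ht.ne'])
    calc t * f ((a * s₁ + b * s₂) / t)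
        ≤ t * (a * t₁ / t * f (s₁ / t₁) + b * t₂ / t * f (s₂ / t₂)) := by
          rw [hmix]; gcongr; exact key
      _ = a * (t₁ * f (s₁ / t₁)) + b * (t₂ * f (s₂ / t₂)) := by field_simp

theorem convexOn_mul_log_sub_mul_log :
    ConvexOn ℝ {p : ℝ × ℝ | 0 ≤ p.1 ∧ p.1 ≤ p.2} (fun p => p.1 * log p.1 - p.1 * log p.2) := by
  refine (convexOn_mul_log.subset Set.Icc_subset_Ici_self (convex_Icc 0 1)).perspective.congr ?_
  rintro ⟨s, t⟩ ⟨hs : 0 ≤ s, hst : s ≤ t⟩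
  rcases hs.eq_or_lt with rfl | hs
  · simp
  · have ht := hs.trans_le hst
    simp only [log_div hs.ne' ht.ne']
    field_simp

theorem mul_log_mul_mul_div_mul {q p s t : ℝ} (hq : 0 ≤ q) (hp : 0 ≤ p) (hs : q * p ≤ s)
    (hst : s ≤ t) :
    q * p * log (q * p * t / (p * s)) = q * p * log q - (q * p * log s - q * p * log t) := by
  rcases (mul_nonneg hq hp).eq_or_lt with h | h
  · simp [← h]
  · have hq : 0 < q := pos_of_mul_pos_left h hp
    have hp : 0 < p := pos_of_mul_pos_right h hq.le
    have hs : 0 < s := h.trans_le hs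
    have ht : 0 < t := hs.trans_le hst
    rw [log_div (by positivity) (by positivity), log_mul (by positivity) ht.ne',
      log_mul hq.ne' hp.ne', log_mul hp.ne' hs.ne']
    ring

section CondMutualInfo

variable {X Y : Type*} [Fintype X]

def weightedColumnSum (w : X → ℝ) (y' : Y) : (X → Y → ℝ) →ₗ[ℝ] ℝ where
  toFun P := ∑ x, w x * P x y'
  map_add' P₁ P₂ := by simp only [Pi.add_apply, mul_add, sum_add_distrib]
  map_smul' c P := by
    simp only [Pi.smul_apply, smul_eq_mul, mul_sum, mul_left_comm, RingHom.id_apply]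

@[simp]
theorem weightedColumnSum_apply (w : X → ℝ) (y' : Y) (P : X → Y → ℝ) :
    weightedColumnSum w y' P = ∑ x, w x * P x y' := rfl

variable [Fintype Y] (Q : Y → X → Y → ℝ)

noncomputable def condMutualInfo (P : X → Y → ℝ) : ℝ :=
  ∑ y, ∑ x, ∑ y', (Q y x y' * P x y') *
    log ((Q y x y' * P x y') * (∑ y₂, ∑ x₂, Q y₂ x₂ y' * P x₂ y') /
      ((∑ y₂, Q y₂ x y' * P x y') * (∑ x₂, Q y x₂ y' * P x₂ y')))

def outputJointAndMarginal (y y' : Y) : (X → Y → ℝ) →ₗ[ℝ] ℝ × ℝ :=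
  (weightedColumnSum (Q y · y') y').prod (∑ y₂, weightedColumnSum (Q y₂ · y') y')

variable {Q}

theorem outputJointAndMarginal_mem (hQ0 : ∀ y x y', 0 ≤ Q y x y') {P : X → Y → ℝ} (hP : 0 ≤ P)
    (y y' : Y) : outputJointAndMarginal Q y y' P ∈ {p : ℝ × ℝ | 0 ≤ p.1 ∧ p.1 ≤ p.2} := by
  have hcol : ∀ y₂, 0 ≤ ∑ x, Q y₂ x y' * P x y' :=
    fun y₂ => sum_nonneg fun x _ => mul_nonneg (hQ0 y₂ x y') (hP x y')
  simp only [outputJointAndMarginal, LinearMap.prod_apply, Function.prod_apply, LinearMap.coe_sum,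
    Finset.sum_apply, weightedColumnSum_apply]
  exact ⟨hcol y, single_le_sum (f := fun y₂ => ∑ x, Q y₂ x y' * P x y') (fun y₂ _ => hcol y₂)
    (mem_univ y)⟩

theorem condMutualInfo_eq (hQ0 : ∀ y x y', 0 ≤ Q y x y') (hQ1 : ∀ x y', ∑ y, Q y x y' = 1)
    {P : X → Y → ℝ} (hP : 0 ≤ P) :
    condMutualInfo Q P = ∑ y, ∑ y',
      (weightedColumnSum (fun x => Q y x y' * log (Q y x y')) y' P -
        (fun p : ℝ × ℝ => p.1 * log p.1 - p.1 * log p.2) (outputJointAndMarginal Q y y' P)) := by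
  have hterm : ∀ y x y', 0 ≤ Q y x y' * P x y' := fun y x y' => mul_nonneg (hQ0 y x y') (hP x y')
  have hjoint : ∀ y x y', Q y x y' * P x y' ≤ ∑ x₂, Q y x₂ y' * P x₂ y' := fun y x y' =>
    single_le_sum (fun x₂ _ => hterm y x₂ y') (mem_univ x)
  have hmarg : ∀ y y', ∑ x₂, Q y x₂ y' * P x₂ y' ≤ ∑ y₂, ∑ x₂, Q y₂ x₂ y' * P x₂ y' :=
    fun y y' => by simpa [outputJointAndMarginal] using (outputJointAndMarginal_mem hQ0 hP y y').2
  simp only [condMutualInfo, outputJointAndMarginal, LinearMap.prod_apply, Function.prod_apply,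
    LinearMap.coe_sum, Finset.sum_apply, weightedColumnSum_apply, ← sum_mul, hQ1, one_mul]
  refine sum_congr rfl fun y _ => ?_
  rw [sum_comm]
  refine sum_congr rfl fun y' _ => ?_
  rw [sum_mul, sum_mul, ← sum_sub_distrib, ← sum_sub_distrib]
  refine sum_congr rfl fun x _ => ?_
  rw [mul_log_mul_mul_div_mul (hQ0 y x y') (hP x y') (hjoint y x y') (hmarg y y')]
  ring

theorem concaveOn_condMutualInfo (hQ0 : ∀ y x y', 0 ≤ Q y x y')
    (hQ1 : ∀ x y', ∑ y, Q y x y' = 1) :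
    ConcaveOn ℝ (Set.Ici 0) (condMutualInfo Q) := by
  refine ConcaveOn.congr ?_ (fun P hP => (condMutualInfo_eq hQ0 hQ1 hP).symm)
  refine ConcaveOn.sum _ (convex_Ici 0) fun y _ => ConcaveOn.sum _ (convex_Ici 0) fun y' _ => ?_
  refine ((weightedColumnSum _ y').concaveOn (convex_Ici 0)).sub ?_
  exact (convexOn_mul_log_sub_mul_log.comp_linearMap _).subset
    (fun P hP => outputJointAndMarginal_mem hQ0 hP y y') (convex_Ici 0)

end CondMutualInfo

theorem convex_setOf_nonneg_sum_sum_eq_one {X Y : Type*} [Fintype X] [Fintype Y] :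
    Convex ℝ {P : X → Y → ℝ | (∀ x y', 0 ≤ P x y') ∧ ∑ x, ∑ y', P x y' = 1} := by
  rintro P₁ ⟨hP₁, hsum₁⟩ P₂ ⟨hP₂, hsum₂⟩ a b ha hb hab
  simp only [Set.mem_ofPred_eq, Pi.add_apply, Pi.smul_apply, smul_eq_mul, sum_add_distrib,
    ← mul_sum, hsum₁, hsum₂, mul_one, hab, and_true]
  exact fun x y' => add_nonneg (mul_nonneg ha (hP₁ x y')) (mul_nonneg hb (hP₂ x y'))

theorem stmt13_general {X Y : Type*} [Fintype X] [Fintype Y]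
    (Q : Y → X → Y → ℝ)
    (hQ0 : ∀ y x y', 0 ≤ Q y x y')
    (hQ1 : ∀ x y', ∑ y, Q y x y' = 1) :
    ConcaveOn ℝ {P : X → Y → ℝ | (∀ x y', 0 ≤ P x y') ∧ ∑ x, ∑ y', P x y' = 1}
      (fun P => ∑ y, ∑ x, ∑ y',
        (Q y x y' * P x y') *
          Real.log ((Q y x y' * P x y') * (∑ y₂, ∑ x₂, Q y₂ x₂ y' * P x₂ y') /
            ((∑ y₂, Q y₂ x y' * P x y') * (∑ x₂, Q y x₂ y' * P x₂ y')))) :=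
  (concaveOn_condMutualInfo hQ0 hQ1).subset (fun _ hP x y' => hP.1 x y')
    convex_setOf_nonneg_sum_sum_eq_one

theorem stmt13 {X Y : Type*} [Fintype X] [Fintype Y] [Nonempty X] [Nonempty Y]
    (Q : Y → X → Y → ℝ)
    (hQ0 : ∀ y x y', 0 ≤ Q y x y') (hQle : ∀ y x y', Q y x y' ≤ 1)
    (hQ1 : ∀ x y', ∑ y, Q y x y' = 1) :
    ConcaveOn ℝ {P : X → Y → ℝ | (∀ x y', 0 ≤ P x y') ∧ ∑ x, ∑ y', P x y' = 1}
      (fun P => ∑ y, ∑ x, ∑ y',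
        (Q y x y' * P x y') *
          Real.log ((Q y x y' * P x y') * (∑ y₂, ∑ x₂, Q y₂ x₂ y' * P x₂ y') /
            ((∑ y₂, Q y₂ x y' * P x y') * (∑ x₂, Q y x₂ y' * P x₂ y')))) :=
  stmt13_general Q hQ0 hQ1
end

section
/- Consider the 2D majority-vote Z-channel with binary alphabets: Y = maj(X, Y'₁, Y'₂) passed through a Z-channel with crossover α ∈ [1/2, 1], i.e., Q(Y=0 | x,y'₁,y'₂) = 1 if maj(x,y'₁,y'₂)=0 and = α if maj(x,y'₁,y'₂)=1. If a joint distribution P on {0,1}³ of (X, Y'₁, Y'₂) satisfies P_Y = P_{Y'₁} = P_{Y'₂} (where P_Y is the output marginal induced by Q), and α > 1/2, then P(Y'₁=1, Y'₂=1) = P(Y'₁=1, Y'₂=0) = P(Y'₁=0, Y'₂=1) = 0; hence (Y'₁,Y'₂)=(0,0) almost surely, Y given (Y'₁,Y'₂) is independent of X, and I(X;Y|Y'₁,Y'₂) = 0. -/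
open Finset

/-- Majority bit among three bits. -/
def maj (a b c : Bool) : Bool := (a && b) || (a && c) || (b && c)

/-- Channel constants of the 2D majority-vote Z-channel with crossover `α`:
`Q α y x y₁ y₂ = P(Y = y | X = x, Y'₁ = y₁, Y'₂ = y₂)`. -/
def majZ (α : ℝ) (y x y₁ y₂ : Bool) : ℝ :=
  if maj x y₁ y₂ then (if y then 1 - α else α) else (if y then 0 else 1)

/-- Conditional mutual information `I(X ; Y | Y'₁, Y'₂)` of the joint distribution
`R y x y₁ y₂` on `(Y, X, (Y'₁, Y'₂))`, with the convention `0 · log(·) = 0`. -/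
noncomputable def condMI2 (R : Bool → Bool → Bool → Bool → ℝ) : ℝ :=
  ∑ y, ∑ x, ∑ y₁, ∑ y₂,
    R y x y₁ y₂ *
      Real.log (R y x y₁ y₂ * (∑ y', ∑ x', R y' x' y₁ y₂) /
        ((∑ y', R y' x y₁ y₂) * (∑ x', R y x' y₁ y₂)))

lemma log_self_div_self (x : ℝ) : Real.log (x / x) = 0 := by
  rcases eq_or_ne x 0 with h | h
  · simp [h]
  · rw [div_self h, Real.log_one]

theorem stmt16 (α : ℝ) (hα : 1/2 < α) (hα1 : α ≤ 1)
    (P : Bool → Bool → Bool → ℝ)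
    (hP0 : ∀ x y₁ y₂, 0 ≤ P x y₁ y₂)
    (hP1 : ∑ x, ∑ y₁, ∑ y₂, P x y₁ y₂ = 1)
    (hY1 : ∀ y, (∑ x, ∑ y₁, ∑ y₂, majZ α y x y₁ y₂ * P x y₁ y₂) =
      ∑ x, ∑ y₂, P x y y₂)
    (hY2 : ∀ y, (∑ x, ∑ y₁, ∑ y₂, majZ α y x y₁ y₂ * P x y₁ y₂) =
      ∑ x, ∑ y₁, P x y₁ y) :
    (∑ x, P x true true = 0) ∧ (∑ x, P x true false = 0) ∧
    (∑ x, P x false true = 0) ∧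
    condMI2 (fun y x y₁ y₂ => majZ α y x y₁ y₂ * P x y₁ y₂) = 0 := by
  have h1 := hY1 true
  have h2 := hY2 true
  simp only [Fintype.sum_bool, majZ, maj] at h1 h2
  norm_num at h1 h2
  have p0 : ∀ x y₁ y₂, 0 ≤ P x y₁ y₂ := hP0
  have ha : P true true true = 0 ∧ P false true true = 0 ∧
      P true true false = 0 ∧ P false true false = 0 ∧
      P true false true = 0 ∧ P false false true = 0 := by
    have h0tt := p0 true true true
    have h1tt := p0 false true true
    have h0tf := p0 true true false
    have h1tf := p0 false true false
    have h0ft := p0 true false true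
    have h1ft := p0 false false true
    constructor
    · nlinarith
    constructor
    · nlinarith
    constructor
    · nlinarith
    constructor
    · nlinarith
    constructor
    · nlinarith
    · nlinarith
  obtain ⟨e1, e2, e3, e4, e5, e6⟩ := ha
  refine ⟨by simp [Fintype.sum_bool, e1, e2], by simp [Fintype.sum_bool, e3, e4],
    by simp [Fintype.sum_bool, e5, e6], ?_⟩
  simp only [condMI2, Fintype.sum_bool, majZ, maj]
  norm_num [e1, e2, e3, e4, e5, e6]
end

section
/- Consider the binary deterministic channel Y = (X ∨ Y'₁) ∧ Y'₂ on {0,1}. If a joint distribution P of (X, Y'₁, Y'₂) on {0,1}³ satisfies P_Y = P_{Y'₂} (where P_Y is the distribution of (X ∨ Y'₁) ∧ Y'₂ under P), then P(X=0, Y'₁=0, Y'₂=1) = 0, and consequently the conditional mutual information I(X; Y | Y'₁, Y'₂) = 0. -/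
/-!
Summing the hypothesis `P_Y = P_{Y'₂}` at `y = true`, the two sides differ exactly by
`P(0,0,1)`, so that mass vanishes. Afterwards `Y = (X ∨ Y'₁) ∧ Y'₂` no longer depends on `X`
on the support of `P` once `(Y'₁, Y'₂)` is fixed, and a channel output that is a function of
the conditioning variables alone carries no conditional information about `X`.
-/

open Finset

/-- The joint law of `(Y, X, Y'₁, Y'₂)` when `Y = f X Y'₁ Y'₂` and `(X, Y'₁, Y'₂) ∼ P`. -/
def channelJoint (f : Bool → Bool → Bool → Bool) (P : Bool → Bool → Bool → ℝ) :
    Bool → Bool → Bool → Bool → ℝ :=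
  fun y x y₁ y₂ => (if f x y₁ y₂ = y then (1 : ℝ) else 0) * P x y₁ y₂

theorem condMI2_channelJoint_eq_zero (f : Bool → Bool → Bool → Bool)
    (P : Bool → Bool → Bool → ℝ)
    (hf : ∀ x x' y₁ y₂, P x y₁ y₂ ≠ 0 → P x' y₁ y₂ ≠ 0 → f x y₁ y₂ = f x' y₁ y₂) :
    condMI2 (channelJoint f P) = 0 := by
  refine sum_eq_zero fun y _ => sum_eq_zero fun x _ => sum_eq_zero fun y₁ _ =>
    sum_eq_zero fun y₂ _ => ?_
  by_cases hxy : f x y₁ y₂ = y ∧ P x y₁ y₂ ≠ 0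
  swap
  · have hzero : channelJoint f P y x y₁ y₂ = 0 := by
      unfold channelJoint; split_ifs <;> simp_all
    rw [hzero, zero_mul]
  obtain ⟨rfl, hx⟩ := hxy
  have hmarg_x : ∑ y', channelJoint f P y' x y₁ y₂ = P x y₁ y₂ := by
    simp [channelJoint]
  have hmarg_y : ∑ y', ∑ x', channelJoint f P y' x' y₁ y₂ = ∑ x', P x' y₁ y₂ := by
    rw [sum_comm]; simp [channelJoint]
  -- on the support of `P`, every `x'` produces the same output as `x`
  have hslice : ∑ x', channelJoint f P (f x y₁ y₂) x' y₁ y₂ = ∑ x', P x' y₁ y₂ := by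
    refine sum_congr rfl fun x' _ => ?_
    by_cases hx' : P x' y₁ y₂ = 0
    · simp [channelJoint, hx']
    · simp [channelJoint, hf x' x y₁ y₂ hx' hx]
  rw [hmarg_x, hmarg_y, hslice]
  simp [channelJoint]

theorem stmt17_general
    (P : Bool → Bool → Bool → ℝ)
    (hY2 : ∀ y, (∑ x, ∑ y₁, ∑ y₂,
        (if ((x || y₁) && y₂) = y then (1:ℝ) else 0) * P x y₁ y₂) =
      ∑ x, ∑ y₁, P x y₁ y) :
    P false false true = 0 ∧
    condMI2 (fun y x y₁ y₂ =>
      (if ((x || y₁) && y₂) = y then (1:ℝ) else 0) * P x y₁ y₂) = 0 := by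
  have hff : P false false true = 0 := by
    have h := hY2 true
    simp only [Fintype.sum_bool] at h
    norm_num at h
    linarith
  refine ⟨hff, condMI2_channelJoint_eq_zero (fun x y₁ y₂ => (x || y₁) && y₂) P ?_⟩
  intro x x' y₁ y₂ hx hx'
  cases x <;> cases x' <;> cases y₁ <;> cases y₂ <;> simp_all

theorem stmt17
    (P : Bool → Bool → Bool → ℝ)
    (hP0 : ∀ x y₁ y₂, 0 ≤ P x y₁ y₂)
    (hP1 : ∑ x, ∑ y₁, ∑ y₂, P x y₁ y₂ = 1)
    (hY2 : ∀ y, (∑ x, ∑ y₁, ∑ y₂,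
        (if ((x || y₁) && y₂) = y then (1:ℝ) else 0) * P x y₁ y₂) =
      ∑ x, ∑ y₁, P x y₁ y) :
    P false false true = 0 ∧
    condMI2 (fun y x y₁ y₂ =>
      (if ((x || y₁) && y₂) = y then (1:ℝ) else 0) * P x y₁ y₂) = 0 :=
  stmt17_general P hY2
end

section
/- Let X^n, Y^n be finite-alphabet random vectors such that for each t: Y_t is conditionally independent of (X^{t-1}, Y^{t-2}) given (X_t, Y_{t-1}), and X_t is conditionally independent of (X^{t-1}, Y^{t-2}) given Y_{t-1}. Then for each t, the conditional distribution of Y_t given Y^{t-1} depends only on Y_{t-1}, i.e., P(Y_t = y | Y^{t-1} = y^{t-1}) = P(Y_t = y | Y_{t-1} = y_{t-1}); consequently I(X^t; Y_t | Y^{t-1}) = I(X_t; Y_t | Y_{t-1}) and I(X^n → Y^n) = ∑_{t=1}^n I(X_t; Y_t | Y_{t-1}). -/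
open Finset

/-- Probability that the random variable `f` (on finite sample space `Ω` with
pmf `μ`) takes the value `a`. -/
def pr {Ω A : Type*} [Fintype Ω] [DecidableEq A] (μ : Ω → ℝ) (f : Ω → A) (a : A) : ℝ :=
  ∑ ω, if f ω = a then μ ω else 0

/-- Shannon entropy `H(f)`. -/
noncomputable def ent {Ω A : Type*} [Fintype Ω] [Fintype A] [DecidableEq A]
    (μ : Ω → ℝ) (f : Ω → A) : ℝ :=
  -∑ a, pr μ f a * Real.log (pr μ f a)

/-- Conditional entropy `H(f | g)`. -/
noncomputable def condEnt {Ω A B : Type*} [Fintype Ω] [Fintype A] [Fintype B]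
    [DecidableEq A] [DecidableEq B] (μ : Ω → ℝ) (f : Ω → A) (g : Ω → B) : ℝ :=
  ent μ (fun ω => (f ω, g ω)) - ent μ g

/-- Conditional mutual information `I(f ; g | h) = H(g | h) - H(g | f, h)`. -/
noncomputable def cmi {Ω A B C : Type*} [Fintype Ω] [Fintype A] [Fintype B] [Fintype C]
    [DecidableEq A] [DecidableEq B] [DecidableEq C]
    (μ : Ω → ℝ) (f : Ω → A) (g : Ω → B) (h : Ω → C) : ℝ :=
  condEnt μ g h - condEnt μ g (fun ω => (f ω, h ω))

/-- `f` and `g` are conditionally independent given `h`. -/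
def condIndep {Ω A B C : Type*} [Fintype Ω] [DecidableEq A] [DecidableEq B]
    [DecidableEq C] (μ : Ω → ℝ) (f : Ω → A) (g : Ω → B) (h : Ω → C) : Prop :=
  ∀ a b c,
    pr μ (fun ω => (f ω, g ω, h ω)) (a, b, c) * pr μ h c =
      pr μ (fun ω => (f ω, h ω)) (a, c) * pr μ (fun ω => (g ω, h ω)) (b, c)

section Tools
variable {Ω : Type*} [Fintype Ω] {μ : Ω → ℝ}

lemma pr_nonneg (hμ0 : ∀ ω, 0 ≤ μ ω) {A : Type*} [DecidableEq A] (f : Ω → A) (a : A) :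
    0 ≤ pr μ f a :=
  Finset.sum_nonneg fun ω _ => by split <;> simp [hμ0 ω]

lemma pr_congr {A B : Type*} [DecidableEq A] [DecidableEq B] {f : Ω → A} {g : Ω → B} {a : A}
    {b : B} (h : ∀ ω, f ω = a ↔ g ω = b) : pr μ f a = pr μ g b :=
  Finset.sum_congr rfl fun ω _ => by simp only [h ω]

lemma pr_le (hμ0 : ∀ ω, 0 ≤ μ ω) {A B : Type*} [DecidableEq A] [DecidableEq B]
    {f : Ω → A} {g : Ω → B} {a : A} {b : B} (h : ∀ ω, f ω = a → g ω = b) :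
    pr μ f a ≤ pr μ g b := by
  refine Finset.sum_le_sum fun ω _ => ?_
  by_cases hf : f ω = a
  · simp [hf, h ω hf]
  · simp only [hf, if_false]
    split <;> simp [hμ0 ω]

lemma pr_marg {A B : Type*} [Fintype B] [DecidableEq A] [DecidableEq B]
    (f : Ω → A) (g : Ω → B) (a : A) :
    pr μ f a = ∑ b, pr μ (fun ω => (f ω, g ω)) (a, b) := by
  unfold pr
  rw [Finset.sum_comm]
  refine Finset.sum_congr rfl fun ω _ => ?_
  simp [Prod.ext_iff, ite_and, Finset.sum_ite_eq]

lemma pr_fiber {A B C : Type*} [Fintype B] [DecidableEq A] [DecidableEq B] [DecidableEq C]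
    (f : Ω → A) (g : Ω → B) (π : B → C) (a : A) (c : C) :
    pr μ (fun ω => (f ω, π (g ω))) (a, c)
      = ∑ b ∈ univ.filter (fun b => π b = c), pr μ (fun ω => (f ω, g ω)) (a, b) := by
  unfold pr
  rw [Finset.sum_comm]
  refine Finset.sum_congr rfl fun ω _ => ?_
  rw [Finset.sum_filter]
  simp only [Prod.ext_iff, ite_and]
  by_cases hf : f ω = a
  · simp only [hf, if_true]
    have key : ∀ b : B, (if π b = c then if g ω = b then μ ω else 0 else 0)
        = if g ω = b then (if π b = c then μ ω else 0) else 0 := fun b => by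
      by_cases h1 : π b = c <;> by_cases h2 : g ω = b <;> simp [h1, h2]
    simp only [key, Finset.sum_ite_eq, Finset.mem_univ, if_true]
  · simp [hf]

lemma pr_fiber' {B C : Type*} [Fintype B] [DecidableEq B] [DecidableEq C]
    (g : Ω → B) (π : B → C) (c : C) :
    pr μ (fun ω => π (g ω)) c
      = ∑ b ∈ univ.filter (fun b => π b = c), pr μ g b := by
  unfold pr
  rw [Finset.sum_comm]
  refine Finset.sum_congr rfl fun ω _ => ?_
  rw [Finset.sum_filter]
  have key : ∀ b : B, (if π b = c then if g ω = b then μ ω else 0 else 0)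
      = if g ω = b then (if π b = c then μ ω else 0) else 0 := fun b => by
    by_cases h1 : π b = c <;> by_cases h2 : g ω = b <;> simp [h1, h2]
  simp only [key, Finset.sum_ite_eq, Finset.mem_univ, if_true]

lemma pr_marg' {A B : Type*} [Fintype A] [DecidableEq A] [DecidableEq B]
    (f : Ω → A) (g : Ω → B) (b : B) :
    pr μ g b = ∑ a, pr μ (fun ω => (f ω, g ω)) (a, b) := by
  rw [pr_marg g f b]
  exact Finset.sum_congr rfl fun a _ => pr_congr fun ω => by simp [Prod.ext_iff, and_comm]

lemma condEnt_eq {A B : Type*} [Fintype A] [Fintype B] [DecidableEq A] [DecidableEq B]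
    (f : Ω → A) (g : Ω → B) :
    condEnt μ f g = ∑ a, ∑ b, pr μ (fun ω => (f ω, g ω)) (a, b) *
      (Real.log (pr μ g b) - Real.log (pr μ (fun ω => (f ω, g ω)) (a, b))) := by
  unfold condEnt ent
  rw [Fintype.sum_prod_type]
  have h1 : ∑ b, pr μ g b * Real.log (pr μ g b)
      = ∑ a, ∑ b, pr μ (fun ω => (f ω, g ω)) (a, b) * Real.log (pr μ g b) := by
    rw [Finset.sum_comm]
    refine Finset.sum_congr rfl fun b _ => ?_
    rw [pr_marg' f g b, Finset.sum_mul]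
  rw [h1]
  simp only [mul_sub, Finset.sum_sub_distrib]
  ring

lemma condEnt_coarse (hμ0 : ∀ ω, 0 ≤ μ ω) {A B C : Type*} [Fintype A] [Fintype B] [Fintype C]
    [DecidableEq A] [DecidableEq B] [DecidableEq C]
    (f : Ω → A) (g : Ω → B) (π : B → C)
    (hcond : ∀ a b, pr μ (fun ω => (f ω, g ω)) (a, b) * pr μ (fun ω => π (g ω)) (π b)
      = pr μ (fun ω => (f ω, π (g ω))) (a, π b) * pr μ g b) :
    condEnt μ f g = condEnt μ f (fun ω => π (g ω)) := by
  rw [condEnt_eq, condEnt_eq]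
  have hR : ∀ a : A, (∑ c, pr μ (fun ω => (f ω, π (g ω))) (a, c) *
        (Real.log (pr μ (fun ω => π (g ω)) c)
          - Real.log (pr μ (fun ω => (f ω, π (g ω))) (a, c))))
      = ∑ b, pr μ (fun ω => (f ω, g ω)) (a, b) *
        (Real.log (pr μ (fun ω => π (g ω)) (π b))
          - Real.log (pr μ (fun ω => (f ω, π (g ω))) (a, π b))) := by
    intro a
    rw [← Finset.sum_fiberwise_of_maps_to (g := π) (fun b _ => Finset.mem_univ (π b))]
    refine Finset.sum_congr rfl fun c _ => ?_
    set t1 := Real.log (pr μ (fun ω => π (g ω)) c) with ht1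
    set t2 := Real.log (pr μ (fun ω => (f ω, π (g ω))) (a, c)) with ht2
    rw [pr_fiber f g π a c, Finset.sum_mul]
    refine Finset.sum_congr rfl fun b hb => ?_
    rw [Finset.mem_filter] at hb
    rw [hb.2, ← ht1, ← ht2]
  rw [Finset.sum_congr rfl fun a _ => hR a]
  refine Finset.sum_congr rfl fun a _ => Finset.sum_congr rfl fun b _ => ?_
  by_cases hp : pr μ (fun ω => (f ω, g ω)) (a, b) = 0
  · simp [hp]
  · have h1 : 0 < pr μ (fun ω => (f ω, g ω)) (a, b) :=
      lt_of_le_of_ne (pr_nonneg hμ0 _ _) (Ne.symm hp)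
    have h2 : 0 < pr μ g b :=
      lt_of_lt_of_le h1 (pr_le hμ0 fun ω h => (Prod.mk.injEq _ _ _ _ ▸ h : _ ∧ _).2)
    have h3 : 0 < pr μ (fun ω => π (g ω)) (π b) :=
      lt_of_lt_of_le h2 (pr_le hμ0 fun ω h => congrArg π h)
    have h4 : 0 < pr μ (fun ω => (f ω, π (g ω))) (a, π b) := by
      refine lt_of_lt_of_le h1 (pr_le hμ0 fun ω h => ?_)
      have h' : f ω = a ∧ g ω = b := by simpa [Prod.ext_iff] using h
      simp [Prod.ext_iff, h'.1, h'.2]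
    have hl := congrArg Real.log (hcond a b)
    rw [Real.log_mul h1.ne' h3.ne', Real.log_mul h4.ne' h2.ne'] at hl
    have : Real.log (pr μ g b) - Real.log (pr μ (fun ω => (f ω, g ω)) (a, b))
        = Real.log (pr μ (fun ω => π (g ω)) (π b))
          - Real.log (pr μ (fun ω => (f ω, π (g ω))) (a, π b)) := by linarith
    rw [this]

lemma fin_snoc_split {k : ℕ} {Z : Type*} (g v : Fin (k+1) → Z) :
    g = v ↔ ((fun i : Fin k => g i.castSucc) = fun i : Fin k => v i.castSucc)
      ∧ g (Fin.last k) = v (Fin.last k) := by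
  constructor
  · rintro rfl; exact ⟨rfl, rfl⟩
  · rintro ⟨h1, h2⟩
    funext i
    exact Fin.lastCases h2 (fun j => congrFun h1 j) i

lemma key_indep (hμ0 : ∀ ω, 0 ≤ μ ω) {A B C D : Type*}
    [Fintype A] [Fintype B] [Fintype C] [Fintype D]
    [DecidableEq A] [DecidableEq B] [DecidableEq C] [DecidableEq D]
    (Av : Ω → A) (Bv : Ω → B) (Cv : Ω → C) (Dv : Ω → D)
    (hM : ∀ a b x d, pr μ (fun ω => (Av ω, Bv ω, Cv ω, Dv ω)) (a, b, x, d)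
        * pr μ (fun ω => (Cv ω, Dv ω)) (x, d)
      = pr μ (fun ω => (Av ω, Cv ω, Dv ω)) (a, x, d)
        * pr μ (fun ω => (Bv ω, Cv ω, Dv ω)) (b, x, d))
    (hI : ∀ b x d, pr μ (fun ω => (Bv ω, Cv ω, Dv ω)) (b, x, d) * pr μ Dv d
      = pr μ (fun ω => (Cv ω, Dv ω)) (x, d) * pr μ (fun ω => (Bv ω, Dv ω)) (b, d)) :
    ∀ a b d, pr μ (fun ω => (Av ω, Bv ω, Dv ω)) (a, b, d) * pr μ Dv d
      = pr μ (fun ω => (Av ω, Dv ω)) (a, d) * pr μ (fun ω => (Bv ω, Dv ω)) (b, d) := by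
  intro a b d
  have star : ∀ x, pr μ (fun ω => (Av ω, Bv ω, Cv ω, Dv ω)) (a, b, x, d) * pr μ Dv d
      = pr μ (fun ω => (Av ω, Cv ω, Dv ω)) (a, x, d)
        * pr μ (fun ω => (Bv ω, Dv ω)) (b, d) := by
    intro x
    by_cases hx : pr μ (fun ω => (Cv ω, Dv ω)) (x, d) = 0
    · have e1 : pr μ (fun ω => (Av ω, Bv ω, Cv ω, Dv ω)) (a, b, x, d) = 0 :=
        le_antisymm (le_of_le_of_eq (pr_le hμ0 fun ω h => by
          simp only [Prod.ext_iff] at h ⊢; tauto) hx) (pr_nonneg hμ0 _ _)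
      have e2 : pr μ (fun ω => (Av ω, Cv ω, Dv ω)) (a, x, d) = 0 :=
        le_antisymm (le_of_le_of_eq (pr_le hμ0 fun ω h => by
          simp only [Prod.ext_iff] at h ⊢; tauto) hx) (pr_nonneg hμ0 _ _)
      rw [e1, e2]; ring
    · apply mul_right_cancel₀ hx
      calc pr μ (fun ω => (Av ω, Bv ω, Cv ω, Dv ω)) (a, b, x, d) * pr μ Dv d
            * pr μ (fun ω => (Cv ω, Dv ω)) (x, d)
          = pr μ (fun ω => (Av ω, Bv ω, Cv ω, Dv ω)) (a, b, x, d)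
            * pr μ (fun ω => (Cv ω, Dv ω)) (x, d) * pr μ Dv d := by ring
        _ = pr μ (fun ω => (Av ω, Cv ω, Dv ω)) (a, x, d)
            * pr μ (fun ω => (Bv ω, Cv ω, Dv ω)) (b, x, d) * pr μ Dv d := by rw [hM a b x d]
        _ = pr μ (fun ω => (Av ω, Cv ω, Dv ω)) (a, x, d)
            * (pr μ (fun ω => (Bv ω, Cv ω, Dv ω)) (b, x, d) * pr μ Dv d) := by ring
        _ = pr μ (fun ω => (Av ω, Cv ω, Dv ω)) (a, x, d)
            * (pr μ (fun ω => (Cv ω, Dv ω)) (x, d) * pr μ (fun ω => (Bv ω, Dv ω)) (b, d)) := by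
              rw [hI b x d]
        _ = pr μ (fun ω => (Av ω, Cv ω, Dv ω)) (a, x, d)
            * pr μ (fun ω => (Bv ω, Dv ω)) (b, d) * pr μ (fun ω => (Cv ω, Dv ω)) (x, d) := by
              ring
  have m1 : pr μ (fun ω => (Av ω, Bv ω, Dv ω)) (a, b, d)
      = ∑ x, pr μ (fun ω => (Av ω, Bv ω, Cv ω, Dv ω)) (a, b, x, d) := by
    rw [pr_marg (fun ω => (Av ω, Bv ω, Dv ω)) Cv (a, b, d)]
    exact Finset.sum_congr rfl fun x _ =>
      pr_congr fun ω => by simp only [Prod.ext_iff]; tauto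
  have m2 : pr μ (fun ω => (Av ω, Dv ω)) (a, d)
      = ∑ x, pr μ (fun ω => (Av ω, Cv ω, Dv ω)) (a, x, d) := by
    rw [pr_marg (fun ω => (Av ω, Dv ω)) Cv (a, d)]
    exact Finset.sum_congr rfl fun x _ =>
      pr_congr fun ω => by simp only [Prod.ext_iff]; tauto
  rw [m1, m2, Finset.sum_mul, Finset.sum_mul]
  exact Finset.sum_congr rfl fun x _ => star x

end Tools

theorem stmt19 {Ω 𝒳 𝒴 : Type*} [Fintype Ω] [Fintype 𝒳] [Fintype 𝒴]
    [DecidableEq 𝒳] [DecidableEq 𝒴]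
    (μ : Ω → ℝ) (hμ0 : ∀ ω, 0 ≤ μ ω) (hμ1 : ∑ ω, μ ω = 1)
    (n : ℕ) (X : ℕ → Ω → 𝒳) (Y : ℕ → Ω → 𝒴)
    (hMarkov : ∀ t, 1 ≤ t → t ≤ n →
      condIndep μ (Y t)
        (fun ω => ((fun i : Fin (t-1) => X (i+1) ω), (fun i : Fin (t-1) => Y i ω)))
        (fun ω => (X t ω, Y (t-1) ω)))
    (hInput : ∀ t, 1 ≤ t → t ≤ n →
      condIndep μ (X t)
        (fun ω => ((fun i : Fin (t-1) => X (i+1) ω), (fun i : Fin (t-1) => Y i ω)))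
        (Y (t-1))) :
    (∀ t (ht : 1 ≤ t), t ≤ n → ∀ (y : 𝒴) (yv : Fin t → 𝒴),
      pr μ (fun ω => (Y t ω, fun i : Fin t => Y i ω)) (y, yv) *
          pr μ (Y (t-1)) (yv ⟨t-1, by omega⟩) =
        pr μ (fun ω => (Y t ω, Y (t-1) ω)) (y, yv ⟨t-1, by omega⟩) *
          pr μ (fun ω => (fun i : Fin t => Y i ω)) yv) ∧
    (∀ t, 1 ≤ t → t ≤ n →
      cmi μ (fun ω => (fun i : Fin t => X (i+1) ω)) (Y t)
          (fun ω => (fun i : Fin t => Y i ω)) =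
        cmi μ (X t) (Y t) (Y (t-1))) ∧
    (∑ t ∈ Finset.Icc 1 n,
        cmi μ (fun ω => (fun i : Fin t => X (i+1) ω)) (Y t)
          (fun ω => (fun i : Fin t => Y i ω))) =
      ∑ t ∈ Finset.Icc 1 n, cmi μ (X t) (Y t) (Y (t-1)) := by
  classical
  have main : ∀ t (ht : 1 ≤ t), t ≤ n → ∀ (y : 𝒴) (yv : Fin t → 𝒴),
      pr μ (fun ω => (Y t ω, fun i : Fin t => Y i ω)) (y, yv) *
          pr μ (Y (t-1)) (yv ⟨t-1, by omega⟩) =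
        pr μ (fun ω => (Y t ω, Y (t-1) ω)) (y, yv ⟨t-1, by omega⟩) *
          pr μ (fun ω => (fun i : Fin t => Y i ω)) yv := by
    intro t ht htn y yv
    obtain ⟨k, rfl⟩ : ∃ k, t = k + 1 := ⟨t - 1, by omega⟩
    have hM0 := hMarkov (k+1) (by omega) htn
    have hI0 := hInput (k+1) (by omega) htn
    have hI : ∀ (b : (Fin k → 𝒳) × (Fin k → 𝒴)) (x : 𝒳) (d : 𝒴),
        pr μ (fun ω => ((fun i : Fin k => X (i+1) ω, fun i : Fin k => Y i ω),
            X (k+1) ω, Y k ω)) (b, x, d) * pr μ (Y k) d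
          = pr μ (fun ω => (X (k+1) ω, Y k ω)) (x, d)
            * pr μ (fun ω => ((fun i : Fin k => X (i+1) ω, fun i : Fin k => Y i ω),
                Y k ω)) (b, d) := by
      intro b x d
      have e : pr μ (fun ω => ((fun i : Fin k => X (i+1) ω, fun i : Fin k => Y i ω),
            X (k+1) ω, Y k ω)) (b, x, d)
          = pr μ (fun ω => (X (k+1) ω,
              (fun i : Fin k => X (i+1) ω, fun i : Fin k => Y i ω), Y k ω)) (x, b, d) :=
        pr_congr fun ω => by simp only [Prod.ext_iff]; tauto
      rw [e]
      exact hI0 x b d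
    have key := key_indep hμ0 (Y (k+1))
      (fun ω => (fun i : Fin k => X (i+1) ω, fun i : Fin k => Y i ω))
      (X (k+1)) (Y k) (fun a b x d => hM0 a b (x, d)) hI
    set yb : Fin k → 𝒴 := fun i => yv i.castSucc with hyb
    set d : 𝒴 := yv (Fin.last k) with hd
    have split : ∀ ω, ((fun i : Fin (k+1) => Y i ω) = yv)
        ↔ ((fun i : Fin k => Y i ω) = yb ∧ Y k ω = d) := by
      intro ω
      rw [fin_snoc_split (fun i : Fin (k+1) => Y i ω) yv]
      constructor
      · rintro ⟨h1, h2⟩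
        exact ⟨by funext i; exact congrFun h1 i, h2⟩
      · rintro ⟨h1, h2⟩
        exact ⟨by funext i; exact congrFun h1 i, h2⟩
    have g1 : pr μ (fun ω => (Y (k+1) ω, fun i : Fin (k+1) => Y i ω)) (y, yv)
        = ∑ bx : Fin k → 𝒳, pr μ (fun ω => (Y (k+1) ω,
            (fun i : Fin k => X (i+1) ω, fun i : Fin k => Y i ω), Y k ω))
            (y, (bx, yb), d) := by
      have a1 : pr μ (fun ω => (Y (k+1) ω, fun i : Fin (k+1) => Y i ω)) (y, yv)
          = pr μ (fun ω => ((Y (k+1) ω, (fun i : Fin k => Y i ω), Y k ω))) (y, yb, d) :=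
        pr_congr fun ω => by
          simp only [Prod.ext_iff, split ω]
          try tauto
      rw [a1, pr_marg (fun ω => (Y (k+1) ω, (fun i : Fin k => Y i ω), Y k ω))
        (fun ω => (fun i : Fin k => X (i+1) ω)) (y, yb, d)]
      exact Finset.sum_congr rfl fun bx _ =>
        pr_congr fun ω => by simp only [Prod.ext_iff]; tauto
    have g2 : pr μ (fun ω => (fun i : Fin (k+1) => Y i ω)) yv
        = ∑ bx : Fin k → 𝒳, pr μ (fun ω =>
            ((fun i : Fin k => X (i+1) ω, fun i : Fin k => Y i ω), Y k ω))
            ((bx, yb), d) := by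
      have a1 : pr μ (fun ω => (fun i : Fin (k+1) => Y i ω)) yv
          = pr μ (fun ω => ((fun i : Fin k => Y i ω), Y k ω)) (yb, d) :=
        pr_congr fun ω => by
          simp only [Prod.ext_iff]
          exact split ω
      rw [a1, pr_marg (fun ω => ((fun i : Fin k => Y i ω), Y k ω))
        (fun ω => (fun i : Fin k => X (i+1) ω)) (yb, d)]
      exact Finset.sum_congr rfl fun bx _ =>
        pr_congr fun ω => by simp only [Prod.ext_iff]; tauto
    have hyd : yv ⟨k+1-1, by omega⟩ = d := rfl
    rw [hyd, g1, g2, Finset.sum_mul, Finset.mul_sum]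
    exact Finset.sum_congr rfl fun bx _ => key y (bx, yb) d
  have part2 : ∀ t, 1 ≤ t → t ≤ n →
      cmi μ (fun ω => (fun i : Fin t => X (i+1) ω)) (Y t)
          (fun ω => (fun i : Fin t => Y i ω)) =
        cmi μ (X t) (Y t) (Y (t-1)) := by
    intro t ht htn
    obtain ⟨k, rfl⟩ : ∃ k, t = k + 1 := ⟨t - 1, by omega⟩
    have E1 : condEnt μ (Y (k+1)) (fun ω => (fun i : Fin (k+1) => Y i ω))
        = condEnt μ (Y (k+1)) (Y k) :=
      condEnt_coarse hμ0 (Y (k+1)) (fun ω => (fun i : Fin (k+1) => Y i ω))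
        (fun v => v (Fin.last k)) (fun a b => main (k+1) (by omega) htn a b)
    have E2 : condEnt μ (Y (k+1)) (fun ω =>
          ((fun i : Fin (k+1) => X (i+1) ω), (fun i : Fin (k+1) => Y i ω)))
        = condEnt μ (Y (k+1)) (fun ω => (X (k+1) ω, Y k ω)) := by
      refine condEnt_coarse hμ0 (Y (k+1))
        (fun ω => ((fun i : Fin (k+1) => X (i+1) ω), (fun i : Fin (k+1) => Y i ω)))
        (fun p => (p.1 (Fin.last k), p.2 (Fin.last k))) (fun a p => ?_)
      have e1 : pr μ (fun ω => (Y (k+1) ω,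
            ((fun i : Fin (k+1) => X (i+1) ω), (fun i : Fin (k+1) => Y i ω)))) (a, p)
          = pr μ (fun ω => (Y (k+1) ω,
              ((fun i : Fin k => X (i+1) ω, fun i : Fin k => Y i ω),
                (X (k+1) ω, Y k ω))))
              (a, ((fun i : Fin k => p.1 i.castSucc, fun i : Fin k => p.2 i.castSucc),
                (p.1 (Fin.last k), p.2 (Fin.last k)))) :=
        pr_congr fun ω => by
          simp only [Prod.ext_iff]
          rw [fin_snoc_split (fun i : Fin (k+1) => X (i+1) ω) p.1,
            fin_snoc_split (fun i : Fin (k+1) => Y i ω) p.2]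
          constructor
          · rintro ⟨h0, ⟨hx1, hx2⟩, hy1, hy2⟩
            exact ⟨h0, ⟨by funext i; exact congrFun hx1 i,
              by funext i; exact congrFun hy1 i⟩, hx2, hy2⟩
          · rintro ⟨h0, ⟨hx1, hy1⟩, hx2, hy2⟩
            exact ⟨h0, ⟨by funext i; exact congrFun hx1 i, hx2⟩,
              by funext i; exact congrFun hy1 i, hy2⟩
      have e2 : pr μ (fun ω =>
            ((fun i : Fin (k+1) => X (i+1) ω), (fun i : Fin (k+1) => Y i ω))) p
          = pr μ (fun ω =>
              ((fun i : Fin k => X (i+1) ω, fun i : Fin k => Y i ω),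
                (X (k+1) ω, Y k ω)))
              ((fun i : Fin k => p.1 i.castSucc, fun i : Fin k => p.2 i.castSucc),
                (p.1 (Fin.last k), p.2 (Fin.last k))) :=
        pr_congr fun ω => by
          simp only [Prod.ext_iff]
          rw [fin_snoc_split (fun i : Fin (k+1) => X (i+1) ω) p.1,
            fin_snoc_split (fun i : Fin (k+1) => Y i ω) p.2]
          constructor
          · rintro ⟨⟨hx1, hx2⟩, hy1, hy2⟩
            exact ⟨⟨by funext i; exact congrFun hx1 i,
              by funext i; exact congrFun hy1 i⟩, hx2, hy2⟩
          · rintro ⟨⟨hx1, hy1⟩, hx2, hy2⟩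
            exact ⟨⟨by funext i; exact congrFun hx1 i, hx2⟩,
              by funext i; exact congrFun hy1 i, hy2⟩
      rw [e1, e2]
      exact hMarkov (k+1) (by omega) htn a
        (fun i : Fin k => p.1 i.castSucc, fun i : Fin k => p.2 i.castSucc)
        (p.1 (Fin.last k), p.2 (Fin.last k))
    unfold cmi
    rw [E1, E2]
    exact rfl
  refine ⟨main, part2, Finset.sum_congr rfl fun t ht => ?_⟩
  rw [Finset.mem_Icc] at ht
  exact part2 t ht.1 ht.2
end
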